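/- The number of dispersed Dyck paths of length 2n (lattice paths from (0,0) to (2n,0) with up steps (1,1), down steps (1,-1) staying weakly above the x-axis, and horizontal steps (1,0) allowed only at height 0) equals the central binomial coefficient binom(2n, n). -/
import Mathlib


/-- A dispersed Dyck path of length `2n`: up/down steps never going below the `x`-axis,
with horizontal steps only at height 0, encoded by heights. -/
def IsDispersedDyck (n : ℕ) (h : Fin (2*n + 1) → ℕ) : Prop :=
  h 0 = 0 ∧ h (Fin.last (2*n)) = 0 ∧
  ∀ i : Fin (2*n), h i.succ = h i.castSucc + 1 ∨ h i.castSucc = h i.succ + 1 ∨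
    (h i.succ = h i.castSucc ∧ h i.castSucc = 0)

/-- Generalized dispersed paths: length `m`, starting at height `k`, ending at 0. -/
def DD (m k : ℕ) (h : Fin (m + 1) → ℕ) : Prop :=
  h 0 = k ∧ h (Fin.last m) = 0 ∧
  ∀ i : Fin m, h i.succ = h i.castSucc + 1 ∨ h i.castSucc = h i.succ + 1 ∨
    (h i.succ = h i.castSucc ∧ h i.castSucc = 0)

lemma cons_DD (m k x : ℕ) (t : Fin (m + 1) → ℕ) :
    DD (m + 1) k (Fin.cons x t) ↔ x = k ∧ (t 0 = k + 1 ∨ t 0 = k - 1) ∧ DD m (t 0) t := by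
  unfold DD
  rw [Fin.forall_fin_succ, ← Fin.succ_last]
  simp only [Fin.cons_succ, Fin.castSucc_zero, Fin.cons_zero, ← Fin.succ_castSucc]
  constructor
  · rintro ⟨rfl, hl, h0, hsteps⟩
    refine ⟨rfl, by omega, ?_, hl, hsteps⟩
    trivial
  · rintro ⟨rfl, h0, -, hl, hsteps⟩
    exact ⟨rfl, hl, by omega, hsteps⟩

lemma DD_bound {m k : ℕ} {h : Fin (m + 1) → ℕ} (hd : DD m k h) :
    ∀ i : Fin (m + 1), h i ≤ k + i.val := by
  intro i
  induction i using Fin.induction with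
  | zero => simp [hd.1]
  | succ j ih =>
      have hstep := hd.2.2 j
      have h1 : (j.succ : Fin (m + 1)).val = j.val + 1 := rfl
      have h2 : (j.castSucc : Fin (m + 1)).val = j.val := rfl
      rw [h2] at ih
      rw [h1]
      omega

lemma DD_finite (m k : ℕ) : {h : Fin (m + 1) → ℕ | DD m k h}.Finite := by
  apply Set.Finite.subset
    (Set.Finite.pi (fun _ : Fin (m + 1) => Set.finite_Iic (k + m)))
  intro h hd
  simp only [Set.mem_pi, Set.mem_univ, Set.mem_Iic, forall_true_left]
  intro i
  have := DD_bound hd i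
  have := i.is_le
  omega

lemma key (m k : ℕ) :
    (if k + 1 ≤ m then m.choose ((m - (k + 1)) / 2) else 0) +
      (if k - 1 ≤ m then m.choose ((m - (k - 1)) / 2) else 0) =
    if k ≤ m + 1 then (m + 1).choose ((m + 1 - k) / 2) else 0 := by
  rcases Nat.eq_zero_or_pos k with rfl | hk
  · -- k = 0
    rcases m with _ | m'
    · norm_num
    · rw [if_pos (by omega), if_pos (by omega), if_pos (by omega)]
      rcases Nat.even_or_odd m' with ⟨j, hj⟩ | ⟨j, hj⟩
      · subst hj
        have e1 : (j + j + 1 - (0 + 1)) / 2 = j := by omega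
        have e2 : (j + j + 1 - (0 - 1)) / 2 = j := by omega
        have e3 : (j + j + 1 + 1 - 0) / 2 = j + 1 := by omega
        rw [e1, e2, e3]
        have hsymm : (j + j + 1).choose (j + 1) = (j + j + 1).choose j := by
          rw [← Nat.choose_symm (by omega : j ≤ j + j + 1)]
          congr 1
          omega
        have := Nat.choose_succ_succ' (j + j + 1) j
        omega
      · subst hj
        have e1 : (2 * j + 1 + 1 - (0 + 1)) / 2 = j := by omega
        have e2 : (2 * j + 1 + 1 - (0 - 1)) / 2 = j + 1 := by omega
        have e3 : (2 * j + 1 + 1 + 1 - 0) / 2 = j + 1 := by omega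
        rw [e1, e2, e3]
        exact (Nat.choose_succ_succ' (2 * j + 1 + 1) j).symm
  · -- k ≥ 1
    rcases le_or_gt k (m + 1) with hkm | hkm
    · rcases eq_or_lt_of_le hkm with rfl | hkm'
      · -- k = m + 1
        rw [if_neg (by omega), if_pos (by omega), if_pos (by omega)]
        have e1 : (m - (m + 1 - 1)) / 2 = 0 := by omega
        have e2 : (m + 1 - (m + 1)) / 2 = 0 := by omega
        rw [e1, e2]
        simp
      · rcases eq_or_lt_of_le (by omega : k ≤ m) with rfl | hkm''
        · -- k = m
          rw [if_neg (by omega), if_pos (by omega), if_pos (by omega)]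
          have e1 : (k - (k - 1)) / 2 = 0 := by omega
          have e2 : (k + 1 - k) / 2 = 0 := by omega
          rw [e1, e2]
          simp
        · -- k + 1 ≤ m
          rw [if_pos (by omega), if_pos (by omega), if_pos (by omega)]
          set a := (m - (k + 1)) / 2 with ha
          have e2 : (m - (k - 1)) / 2 = a + 1 := by omega
          have e3 : (m + 1 - k) / 2 = a + 1 := by omega
          rw [e2, e3]
          exact (Nat.choose_succ_succ' m a).symm
    · rw [if_neg (by omega), if_neg (by omega), if_neg (by omega)]

lemma card_DD (m : ℕ) : ∀ k : ℕ,
    Nat.card {h : Fin (m + 1) → ℕ // DD m k h} =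
      if k ≤ m then Nat.choose m ((m - k) / 2) else 0 := by
  induction m with
  | zero =>
    intro k
    rcases Nat.eq_zero_or_pos k with rfl | hk
    · rw [if_pos (le_refl 0)]
      have hone : Nat.card {h : Fin 1 → ℕ // DD 0 0 h} = 1 := by
        rw [Nat.card_eq_one_iff_unique]
        constructor
        · constructor
          rintro ⟨h1, p1⟩ ⟨h2, p2⟩
          have hh : h1 = h2 := by
            funext i
            have hi : i = 0 := Subsingleton.elim i 0
            rw [hi, p1.1, p2.1]
          exact Subtype.ext hh
        · exact ⟨⟨fun _ => 0, rfl, rfl, fun i => i.elim0⟩⟩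
      simpa using hone
    · rw [if_neg (by omega)]
      have : IsEmpty {h : Fin 1 → ℕ // DD 0 k h} := by
        constructor
        rintro ⟨h, h0, hl, -⟩
        have : (Fin.last 0 : Fin 1) = 0 := rfl
        rw [this, h0] at hl
        omega
      exact Nat.card_of_isEmpty
  | succ m ih =>
    intro k
    have himg : {h : Fin (m + 2) → ℕ | DD (m + 1) k h} =
        (fun t : Fin (m + 1) → ℕ => (Fin.cons k t : Fin (m + 2) → ℕ)) ''
          ({t | DD m (k + 1) t} ∪ {t | DD m (k - 1) t}) := by
      ext h
      constructor
      · intro hd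
        have h0 : h 0 = k := hd.1
        have hc : Fin.cons k (Fin.tail h) = h := by
          rw [← h0]; exact Fin.cons_self_tail h
        have hd' : DD (m + 1) k (Fin.cons k (Fin.tail h)) := by
          rw [hc]; exact hd
        rw [cons_DD] at hd'
        obtain ⟨-, h01, hdd⟩ := hd'
        refine ⟨Fin.tail h, ?_, hc⟩
        rcases h01 with h01 | h01
        · left; rw [h01] at hdd; exact hdd
        · right; rw [h01] at hdd; exact hdd
      · rintro ⟨t, ht, rfl⟩
        rw [Set.mem_setOf_eq, cons_DD]
        rcases ht with ht | ht
        · exact ⟨rfl, Or.inl ht.1, by rw [ht.1]; exact ht⟩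
        · exact ⟨rfl, Or.inr ht.1, by rw [ht.1]; exact ht⟩
    have hinj : Function.Injective (fun t : Fin (m + 1) → ℕ => (Fin.cons k t : Fin (m + 2) → ℕ)) := by
      intro a b hab
      have := congrArg Fin.tail hab
      simpa [Fin.tail_cons] using this
    have hdisj : Disjoint {t : Fin (m + 1) → ℕ | DD m (k + 1) t}
        {t | DD m (k - 1) t} := by
      rw [Set.disjoint_left]
      intro t h1 h2
      have e1 : t 0 = k + 1 := h1.1
      have e2 : t 0 = k - 1 := h2.1
      omega
    calc Nat.card {h : Fin (m + 2) → ℕ // DD (m + 1) k h}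
        = Set.ncard {h : Fin (m + 2) → ℕ | DD (m + 1) k h} :=
          Nat.card_coe_set_eq _
      _ = Set.ncard ((fun t : Fin (m + 1) → ℕ => (Fin.cons k t : Fin (m + 2) → ℕ)) ''
            ({t : Fin (m + 1) → ℕ | DD m (k + 1) t} ∪ {t | DD m (k - 1) t})) := by
          rw [himg]
      _ = Set.ncard ({t : Fin (m + 1) → ℕ | DD m (k + 1) t} ∪ {t | DD m (k - 1) t}) :=
          Set.ncard_image_of_injective _ hinj
      _ = Set.ncard {t : Fin (m + 1) → ℕ | DD m (k + 1) t} +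
            Set.ncard {t : Fin (m + 1) → ℕ | DD m (k - 1) t} :=
          Set.ncard_union_eq hdisj (DD_finite m (k + 1)) (DD_finite m (k - 1))
      _ = Nat.card {t : Fin (m + 1) → ℕ // DD m (k + 1) t} +
            Nat.card {t : Fin (m + 1) → ℕ // DD m (k - 1) t} := by
          rw [← Nat.card_coe_set_eq, ← Nat.card_coe_set_eq]
          rfl
      _ = (if k + 1 ≤ m then Nat.choose m ((m - (k + 1)) / 2) else 0) +
            (if k - 1 ≤ m then Nat.choose m ((m - (k - 1)) / 2) else 0) := by
          rw [ih (k + 1), ih (k - 1)]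
      _ = if k ≤ m + 1 then (m + 1).choose ((m + 1 - k) / 2) else 0 := key m k

/-- The number of dispersed Dyck paths of length `2n` is the central binomial
coefficient `C(2n, n)`. -/
theorem stmt17 (n : ℕ) :
    Nat.card {h : Fin (2*n + 1) → ℕ // IsDispersedDyck n h} = Nat.choose (2*n) n := by
  have h := card_DD (2 * n) 0
  have heq : IsDispersedDyck n = DD (2 * n) 0 := rfl
  rw [heq]
  rw [h, if_pos (Nat.zero_le _), Nat.sub_zero, Nat.mul_div_cancel_left n (by norm_num)]
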